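/- arXiv:0804.3335 — 6 statements merged into one kernel-verified Lean document; each statement's English description precedes it below -/
import Mathlib

section
/- For the rotation surface generated by a unit-speed spacelike curve α with α₃ > 0, the expansions along η₁ and η₂ satisfy 2h₁ = -(α₁'α₃' + α₃α₁'')/(α₃√(1+(α₁')²)) and 2h₂ = -(α₂' + α₃(α₂''α₃' - α₂'α₃''))/(α₃√(1+(α₁')²)). -/
noncomputable section

/-- Minkowski bilinear form on `ℝ⁴`: `-x₁y₁ + x₂y₂ + x₃y₃ + x₄y₄`. -/
def mink (x y : Fin 4 → ℝ) : ℝ := -(x 0 * y 0) + x 1 * y 1 + x 2 * y 2 + x 3 * y 3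

/-- Tangent vector `X_t` of the rotation surface. -/
def Xt (a1 a2 a3 : ℝ → ℝ) (t θ : ℝ) : Fin 4 → ℝ :=
  ![deriv a1 t, deriv a2 t, deriv a3 t * Real.cos θ, deriv a3 t * Real.sin θ]

/-- Tangent vector `X_θ` of the rotation surface. -/
def Xth (a3 : ℝ → ℝ) (t θ : ℝ) : Fin 4 → ℝ :=
  ![0, 0, -(a3 t * Real.sin θ), a3 t * Real.cos θ]

/-- Second derivative `X_tt`. -/
def Xtt (a1 a2 a3 : ℝ → ℝ) (t θ : ℝ) : Fin 4 → ℝ :=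
  ![deriv (deriv a1) t, deriv (deriv a2) t,
    deriv (deriv a3) t * Real.cos θ, deriv (deriv a3) t * Real.sin θ]

/-- Mixed second derivative `X_tθ`. -/
def Xtth (a3 : ℝ → ℝ) (t θ : ℝ) : Fin 4 → ℝ :=
  ![0, 0, -(deriv a3 t * Real.sin θ), deriv a3 t * Real.cos θ]

/-- Second derivative `X_θθ`. -/
def Xthth (a3 : ℝ → ℝ) (t θ : ℝ) : Fin 4 → ℝ :=
  ![0, 0, -(a3 t * Real.cos θ), -(a3 t * Real.sin θ)]

/-- The timelike unit normal `η₁` of the rotation surface. -/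
def eta1 (a1 a2 a3 : ℝ → ℝ) (t θ : ℝ) : Fin 4 → ℝ :=
  (Real.sqrt (1 + (deriv a1 t) ^ 2))⁻¹ •
    ![1 + (deriv a1 t) ^ 2, deriv a1 t * deriv a2 t,
      deriv a1 t * deriv a3 t * Real.cos θ, deriv a1 t * deriv a3 t * Real.sin θ]

/-- The spacelike unit normal `η₂` of the rotation surface. -/
def eta2 (a1 a2 a3 : ℝ → ℝ) (t θ : ℝ) : Fin 4 → ℝ :=
  (Real.sqrt (1 + (deriv a1 t) ^ 2))⁻¹ •
    ![0, -(deriv a3 t), deriv a2 t * Real.cos θ, deriv a2 t * Real.sin θ]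

/-- Expansion `h₁` along `η₁`. -/
def hh1 (a1 a3 : ℝ → ℝ) (t : ℝ) : ℝ :=
  -(deriv a1 t * deriv a3 t + a3 t * deriv (deriv a1) t) /
    (2 * a3 t * Real.sqrt (1 + (deriv a1 t) ^ 2))

/-- Expansion `h₂` along `η₂`. -/
def hh2 (a1 a2 a3 : ℝ → ℝ) (t : ℝ) : ℝ :=
  -(deriv a2 t + a3 t * (deriv (deriv a2) t * deriv a3 t - deriv a2 t * deriv (deriv a3) t)) /
    (2 * a3 t * Real.sqrt (1 + (deriv a1 t) ^ 2))

/-- Mean curvature vector `H = -h₁η₁ + h₂η₂` of the rotation surface. -/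
def Hvec (a1 a2 a3 : ℝ → ℝ) (t θ : ℝ) : Fin 4 → ℝ :=
  (-(hh1 a1 a3 t)) • eta1 a1 a2 a3 t θ + (hh2 a1 a2 a3 t) • eta2 a1 a2 a3 t θ

/-- the expansions along `η₁` and `η₂`, computed by
`2hᵢ = (eᵢG - 2fᵢF + gᵢE)/(EG - F²)`, satisfy the stated formulas. -/
theorem stmt3 (a1 a2 a3 : ℝ → ℝ)
    (hs1 : ContDiff ℝ (⊤ : ℕ∞) a1) (hs2 : ContDiff ℝ (⊤ : ℕ∞) a2) (hs3 : ContDiff ℝ (⊤ : ℕ∞) a3)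
    (hpos : ∀ t, 0 < a3 t)
    (hunit : ∀ t, -(deriv a1 t) ^ 2 + (deriv a2 t) ^ 2 + (deriv a3 t) ^ 2 = 1) :
    ∀ t θ : ℝ,
      (mink (Xtt a1 a2 a3 t θ) (eta1 a1 a2 a3 t θ) * mink (Xth a3 t θ) (Xth a3 t θ)
        - 2 * mink (Xtth a3 t θ) (eta1 a1 a2 a3 t θ) * mink (Xt a1 a2 a3 t θ) (Xth a3 t θ)
        + mink (Xthth a3 t θ) (eta1 a1 a2 a3 t θ) * mink (Xt a1 a2 a3 t θ) (Xt a1 a2 a3 t θ)) /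
        (mink (Xt a1 a2 a3 t θ) (Xt a1 a2 a3 t θ) * mink (Xth a3 t θ) (Xth a3 t θ)
          - (mink (Xt a1 a2 a3 t θ) (Xth a3 t θ)) ^ 2)
        = -(deriv a1 t * deriv a3 t + a3 t * deriv (deriv a1) t) /
            (a3 t * Real.sqrt (1 + (deriv a1 t) ^ 2)) ∧
      (mink (Xtt a1 a2 a3 t θ) (eta2 a1 a2 a3 t θ) * mink (Xth a3 t θ) (Xth a3 t θ)
        - 2 * mink (Xtth a3 t θ) (eta2 a1 a2 a3 t θ) * mink (Xt a1 a2 a3 t θ) (Xth a3 t θ)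
        + mink (Xthth a3 t θ) (eta2 a1 a2 a3 t θ) * mink (Xt a1 a2 a3 t θ) (Xt a1 a2 a3 t θ)) /
        (mink (Xt a1 a2 a3 t θ) (Xt a1 a2 a3 t θ) * mink (Xth a3 t θ) (Xth a3 t θ)
          - (mink (Xt a1 a2 a3 t θ) (Xth a3 t θ)) ^ 2)
        = -(deriv a2 t + a3 t * (deriv (deriv a2) t * deriv a3 t
              - deriv a2 t * deriv (deriv a3) t)) /
            (a3 t * Real.sqrt (1 + (deriv a1 t) ^ 2)) := by

  -- derivative of the unit-speed relation
  have key : ∀ t, deriv a2 t * deriv (deriv a2) t + deriv a3 t * deriv (deriv a3) t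
      = deriv a1 t * deriv (deriv a1) t := by
    intro t
    have h1' : ContDiff ℝ ((⊤:ℕ∞) : WithTop ℕ∞) a1 := hs1.of_le (by simp)
    have h2' : ContDiff ℝ ((⊤:ℕ∞) : WithTop ℕ∞) a2 := hs2.of_le (by simp)
    have h3' : ContDiff ℝ ((⊤:ℕ∞) : WithTop ℕ∞) a3 := hs3.of_le (by simp)
    have d1 : Differentiable ℝ (deriv a1) :=
      ((contDiff_infty_iff_deriv.mp h1').2).differentiable (by simp)
    have d2 : Differentiable ℝ (deriv a2) :=
      ((contDiff_infty_iff_deriv.mp h2').2).differentiable (by simp)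
    have d3 : Differentiable ℝ (deriv a3) :=
      ((contDiff_infty_iff_deriv.mp h3').2).differentiable (by simp)
    have e1 : HasDerivAt (deriv a1) (deriv (deriv a1) t) t := (d1 t).hasDerivAt
    have e2 : HasDerivAt (deriv a2) (deriv (deriv a2) t) t := (d2 t).hasDerivAt
    have e3 : HasDerivAt (deriv a3) (deriv (deriv a3) t) t := (d3 t).hasDerivAt
    have h1 : HasDerivAt (fun s => -(deriv a1 s) ^ 2 + (deriv a2 s) ^ 2 + (deriv a3 s) ^ 2)
        (-((2:ℕ) * deriv a1 t ^ 1 * deriv (deriv a1) t)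
          + (2:ℕ) * deriv a2 t ^ 1 * deriv (deriv a2) t
          + (2:ℕ) * deriv a3 t ^ 1 * deriv (deriv a3) t) t :=
      (((e1.pow 2).neg.add (e2.pow 2)).add (e3.pow 2))
    have h2 : (fun s => -(deriv a1 s) ^ 2 + (deriv a2 s) ^ 2 + (deriv a3 s) ^ 2)
        = fun _ => (1:ℝ) := funext hunit
    rw [h2] at h1
    have h0 := h1.unique (hasDerivAt_const t 1)
    push_cast at h0
    nlinarith [h0]
  intro t θ
  have hcs : Real.sin θ ^ 2 + Real.cos θ ^ 2 = 1 := Real.sin_sq_add_cos_sq θ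
  have hspos : 0 < Real.sqrt (1 + (deriv a1 t) ^ 2) :=
    Real.sqrt_pos.mpr (by positivity)
  have hsne : Real.sqrt (1 + (deriv a1 t) ^ 2) ≠ 0 := ne_of_gt hspos
  have hssq : Real.sqrt (1 + (deriv a1 t) ^ 2) ^ 2 = 1 + (deriv a1 t) ^ 2 :=
    Real.sq_sqrt (by positivity)
  have ha3 : a3 t ≠ 0 := ne_of_gt (hpos t)
  have hA : mink (Xt a1 a2 a3 t θ) (Xt a1 a2 a3 t θ) = 1 := by
    simp only [mink, Xt, Matrix.cons_val_zero, Matrix.cons_val_one, Matrix.head_cons,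
      Matrix.cons_val_two, Matrix.cons_val_three, Matrix.tail_cons]
    nlinarith [hunit t, hcs]
  have hB : mink (Xth a3 t θ) (Xth a3 t θ) = a3 t ^ 2 := by
    simp only [mink, Xth, Matrix.cons_val_zero, Matrix.cons_val_one, Matrix.head_cons,
      Matrix.cons_val_two, Matrix.cons_val_three, Matrix.tail_cons]
    nlinarith [hcs]
  have hC : mink (Xt a1 a2 a3 t θ) (Xth a3 t θ) = 0 := by
    simp only [mink, Xt, Xth, Matrix.cons_val_zero, Matrix.cons_val_one, Matrix.head_cons,
      Matrix.cons_val_two, Matrix.cons_val_three, Matrix.tail_cons]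
    ring
  have he1 : mink (Xtt a1 a2 a3 t θ) (eta1 a1 a2 a3 t θ)
      = -(deriv (deriv a1) t) / Real.sqrt (1 + (deriv a1 t) ^ 2) := by
    simp only [mink, Xtt, eta1, Pi.smul_apply, smul_eq_mul, Matrix.cons_val_zero,
      Matrix.cons_val_one, Matrix.head_cons, Matrix.cons_val_two, Matrix.cons_val_three,
      Matrix.tail_cons]
    field_simp
    linear_combination deriv a1 t * deriv a3 t * deriv (deriv a3) t * hcs + deriv a1 t * key t
  have hf1 : mink (Xtth a3 t θ) (eta1 a1 a2 a3 t θ) = 0 := by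
    simp only [mink, Xtth, eta1, Pi.smul_apply, smul_eq_mul, Matrix.cons_val_zero,
      Matrix.cons_val_one, Matrix.head_cons, Matrix.cons_val_two, Matrix.cons_val_three,
      Matrix.tail_cons]
    ring
  have hg1 : mink (Xthth a3 t θ) (eta1 a1 a2 a3 t θ)
      = -(a3 t * deriv a1 t * deriv a3 t) / Real.sqrt (1 + (deriv a1 t) ^ 2) := by
    simp only [mink, Xthth, eta1, Pi.smul_apply, smul_eq_mul, Matrix.cons_val_zero,
      Matrix.cons_val_one, Matrix.head_cons, Matrix.cons_val_two, Matrix.cons_val_three,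
      Matrix.tail_cons]
    field_simp
    linear_combination (-(a3 t * deriv a1 t * deriv a3 t)) * hcs
  have he2 : mink (Xtt a1 a2 a3 t θ) (eta2 a1 a2 a3 t θ)
      = (-(deriv (deriv a2) t * deriv a3 t) + deriv a2 t * deriv (deriv a3) t)
        / Real.sqrt (1 + (deriv a1 t) ^ 2) := by
    simp only [mink, Xtt, eta2, Pi.smul_apply, smul_eq_mul, Matrix.cons_val_zero,
      Matrix.cons_val_one, Matrix.head_cons, Matrix.cons_val_two, Matrix.cons_val_three,
      Matrix.tail_cons]
    field_simp
    linear_combination deriv a2 t * deriv (deriv a3) t * hcs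
  have hf2 : mink (Xtth a3 t θ) (eta2 a1 a2 a3 t θ) = 0 := by
    simp only [mink, Xtth, eta2, Pi.smul_apply, smul_eq_mul, Matrix.cons_val_zero,
      Matrix.cons_val_one, Matrix.head_cons, Matrix.cons_val_two, Matrix.cons_val_three,
      Matrix.tail_cons]
    ring
  have hg2 : mink (Xthth a3 t θ) (eta2 a1 a2 a3 t θ)
      = -(a3 t * deriv a2 t) / Real.sqrt (1 + (deriv a1 t) ^ 2) := by
    simp only [mink, Xthth, eta2, Pi.smul_apply, smul_eq_mul, Matrix.cons_val_zero,
      Matrix.cons_val_one, Matrix.head_cons, Matrix.cons_val_two, Matrix.cons_val_three,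
      Matrix.tail_cons]
    field_simp
    linear_combination (-(a3 t * deriv a2 t)) * hcs
  constructor
  · rw [hA, hB, hC, he1, hf1, hg1]
    field_simp
    ring
  · rw [hA, hB, hC, he2, hf2, hg2]
    field_simp
    ring
end
end

section
/- For the rotation surface generated by a unit-speed spacelike curve α with α₃ > 0, the Gaussian curvature K = (-e₁g₁ + e₂g₂ + f₁² - f₂²)/(EG - F²) equals -α₃''(t)/α₃(t) at every point. -/
noncomputable section

set_option maxHeartbeats 1000000 in
/-- the Gaussian curvature
`K = (-e₁g₁ + e₂g₂ + f₁² - f₂²)/(EG - F²)` equals `-α₃''/α₃`. -/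
theorem stmt4 (a1 a2 a3 : ℝ → ℝ)
    (hs1 : ContDiff ℝ (⊤ : ℕ∞) a1) (hs2 : ContDiff ℝ (⊤ : ℕ∞) a2) (hs3 : ContDiff ℝ (⊤ : ℕ∞) a3)
    (hpos : ∀ t, 0 < a3 t)
    (hunit : ∀ t, -(deriv a1 t) ^ 2 + (deriv a2 t) ^ 2 + (deriv a3 t) ^ 2 = 1) :
    ∀ t θ : ℝ,
      (-(mink (Xtt a1 a2 a3 t θ) (eta1 a1 a2 a3 t θ)
            * mink (Xthth a3 t θ) (eta1 a1 a2 a3 t θ))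
        + mink (Xtt a1 a2 a3 t θ) (eta2 a1 a2 a3 t θ)
            * mink (Xthth a3 t θ) (eta2 a1 a2 a3 t θ)
        + (mink (Xtth a3 t θ) (eta1 a1 a2 a3 t θ)) ^ 2
        - (mink (Xtth a3 t θ) (eta2 a1 a2 a3 t θ)) ^ 2) /
        (mink (Xt a1 a2 a3 t θ) (Xt a1 a2 a3 t θ) * mink (Xth a3 t θ) (Xth a3 t θ)
          - (mink (Xt a1 a2 a3 t θ) (Xth a3 t θ)) ^ 2)
        = -(deriv (deriv a3) t) / a3 t := by
  intro t θ
  have hs1' : ContDiff ℝ (↑(⊤:ℕ∞)) a1 := hs1.of_le (by simp)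
  have hs2' : ContDiff ℝ (↑(⊤:ℕ∞)) a2 := hs2.of_le (by simp)
  have hs3' : ContDiff ℝ (↑(⊤:ℕ∞)) a3 := hs3.of_le (by simp)
  have hd1 : DifferentiableAt ℝ (deriv a1) t :=
    ((hs1'.iterate_deriv 1).differentiable (by simp)).differentiableAt
  have hd2 : DifferentiableAt ℝ (deriv a2) t :=
    ((hs2'.iterate_deriv 1).differentiable (by simp)).differentiableAt
  have hd3 : DifferentiableAt ℝ (deriv a3) t :=
    ((hs3'.iterate_deriv 1).differentiable (by simp)).differentiableAt
  set p := deriv a1 t with hp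
  set q := deriv a2 t with hq
  set r := deriv a3 t with hr
  set p' := deriv (deriv a1) t with hp'
  set q' := deriv (deriv a2) t with hq'
  set r' := deriv (deriv a3) t with hr'
  have horth : p * p' = q * q' + r * r' := by
    have H : HasDerivAt (fun u => -(deriv a1 u) ^ 2 + (deriv a2 u) ^ 2 + (deriv a3 u) ^ 2)
        (-(2 * p ^ 1 * p') + 2 * q ^ 1 * q' + 2 * r ^ 1 * r') t :=
      (((hd1.hasDerivAt.pow 2).neg.add (hd2.hasDerivAt.pow 2)).add (hd3.hasDerivAt.pow 2))
    have Hc : HasDerivAt (fun u => -(deriv a1 u) ^ 2 + (deriv a2 u) ^ 2 + (deriv a3 u) ^ 2)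
        0 t := by
      have : (fun u => -(deriv a1 u) ^ 2 + (deriv a2 u) ^ 2 + (deriv a3 u) ^ 2)
          = fun _ => (1 : ℝ) := funext hunit
      rw [this]; exact hasDerivAt_const t 1
    have := H.unique Hc
    nlinarith [this]
  have hspos : (0:ℝ) < Real.sqrt (1 + p ^ 2) := Real.sqrt_pos.mpr (by positivity)
  set s := Real.sqrt (1 + p ^ 2) with hs
  have hsq : s ^ 2 = 1 + p ^ 2 := Real.sq_sqrt (by positivity)
  have hs0 : s ≠ 0 := ne_of_gt hspos
  have ha0 : a3 t ≠ 0 := ne_of_gt (hpos t)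
  have htrig : Real.sin θ ^ 2 + Real.cos θ ^ 2 = 1 := Real.sin_sq_add_cos_sq θ
  have hu := hunit t
  rw [← hp, ← hq, ← hr] at hu
  simp only [mink, Xt, Xth, Xtt, Xtth, Xthth, eta1, eta2, ← hp, ← hq, ← hr, ← hp', ← hq',
    ← hr', ← hs, Matrix.cons_val_zero, Matrix.cons_val_one, Matrix.head_cons,
    Matrix.cons_val_two, Matrix.tail_cons, Matrix.cons_val_three, Pi.smul_apply,
    smul_eq_mul]
  have hinv : s⁻¹ * s⁻¹ * (1 + p ^ 2) = 1 := by
    rw [← hsq]; field_simp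
  have hA1 : -(p' * (s⁻¹ * (1 + p ^ 2))) + q' * (s⁻¹ * (p * q))
      + r' * Real.cos θ * (s⁻¹ * (p * r * Real.cos θ))
      + r' * Real.sin θ * (s⁻¹ * (p * r * Real.sin θ)) = s⁻¹ * (-p') := by
    linear_combination (s⁻¹ * p * r * r') * htrig + (-(s⁻¹ * p)) * horth
  have hB1 : -(0 * (s⁻¹ * (1 + p ^ 2))) + 0 * (s⁻¹ * (p * q))
      + -(a3 t * Real.cos θ) * (s⁻¹ * (p * r * Real.cos θ))
      + -(a3 t * Real.sin θ) * (s⁻¹ * (p * r * Real.sin θ))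
      = s⁻¹ * (-(a3 t * p * r)) := by
    linear_combination (-(s⁻¹ * a3 t * p * r)) * htrig
  have hA2 : -(p' * (s⁻¹ * 0)) + q' * (s⁻¹ * -r)
      + r' * Real.cos θ * (s⁻¹ * (q * Real.cos θ))
      + r' * Real.sin θ * (s⁻¹ * (q * Real.sin θ)) = s⁻¹ * (q * r' - q' * r) := by
    linear_combination (s⁻¹ * q * r') * htrig
  have hB2 : -(0 * (s⁻¹ * 0)) + 0 * (s⁻¹ * -r)
      + -(a3 t * Real.cos θ) * (s⁻¹ * (q * Real.cos θ))
      + -(a3 t * Real.sin θ) * (s⁻¹ * (q * Real.sin θ)) = s⁻¹ * (-(a3 t * q)) := by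
    linear_combination (-(s⁻¹ * a3 t * q)) * htrig
  have hF1 : -(0 * (s⁻¹ * (1 + p ^ 2))) + 0 * (s⁻¹ * (p * q))
      + -(r * Real.sin θ) * (s⁻¹ * (p * r * Real.cos θ))
      + r * Real.cos θ * (s⁻¹ * (p * r * Real.sin θ)) = 0 := by ring
  have hF2 : -(0 * (s⁻¹ * 0)) + 0 * (s⁻¹ * -r)
      + -(r * Real.sin θ) * (s⁻¹ * (q * Real.cos θ))
      + r * Real.cos θ * (s⁻¹ * (q * Real.sin θ)) = 0 := by ring
  rw [hA1, hB1, hA2, hB2, hF1, hF2]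
  have hden : (-(p * p) + q * q + r * Real.cos θ * (r * Real.cos θ) + r * Real.sin θ * (r * Real.sin θ)) *
          (-(0 * 0) + 0 * 0 + -(a3 t * Real.sin θ) * -(a3 t * Real.sin θ) + a3 t * Real.cos θ * (a3 t * Real.cos θ)) -
        (-(p * 0) + q * 0 + r * Real.cos θ * -(a3 t * Real.sin θ) + r * Real.sin θ * (a3 t * Real.cos θ)) ^ 2
        = a3 t ^ 2 := by
    linear_combination (a3 t ^ 2 * (Real.sin θ ^ 2 + Real.cos θ ^ 2)) * hu +
      (a3 t ^ 2 * (1 + (Real.sin θ ^ 2 + Real.cos θ ^ 2) * r ^ 2)) * htrig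
  rw [hden]
  rw [div_eq_div_iff (by positivity) ha0]
  linear_combination (-(s⁻¹ * s⁻¹ * a3 t ^ 2 * r)) * horth + (-(s⁻¹ * s⁻¹ * a3 t ^ 2 * r')) * hu
    + (-(r' * a3 t ^ 2)) * hinv
end
end

section
/- Suppose a unit spacelike curve α with α₃ > 0 satisfies the angle representation α₁' = (ε/2)((1-α₃')e^ξ - (1+α₃')e^{-ξ}), α₂' = (ε/2)((1-α₃')e^ξ + (1+α₃')e^{-ξ}), and the expansions satisfy h₁ = h₂ on an interval where (α₃')² ≠ 1. Then ξ'(t) = 1/α₃(t) on that interval. -/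
noncomputable section

/-- in the angle representation, if `h₁ = h₂` and `(α₃')² ≠ 1`,
then `ξ' = 1/α₃`. -/
theorem stmt9 (I : Set ℝ) (hIo : IsOpen I)
    (a1 a2 a3 ξ : ℝ → ℝ) (e : ℝ) (he : e = 1 ∨ e = -1)
    (hs1 : ContDiffOn ℝ (⊤ : ℕ∞) a1 I) (hs2 : ContDiffOn ℝ (⊤ : ℕ∞) a2 I) (hs3 : ContDiffOn ℝ (⊤ : ℕ∞) a3 I)
    (hsξ : ContDiffOn ℝ (⊤ : ℕ∞) ξ I)
    (hpos : ∀ t ∈ I, 0 < a3 t)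
    (hne : ∀ t ∈ I, (deriv a3 t) ^ 2 ≠ 1)
    (ha1 : ∀ t ∈ I, deriv a1 t = e / 2 * ((1 - deriv a3 t) * Real.exp (ξ t)
      - (1 + deriv a3 t) * Real.exp (-(ξ t))))
    (ha2 : ∀ t ∈ I, deriv a2 t = e / 2 * ((1 - deriv a3 t) * Real.exp (ξ t)
      + (1 + deriv a3 t) * Real.exp (-(ξ t))))
    (heq : ∀ t ∈ I, hh1 a1 a3 t = hh2 a1 a2 a3 t) :
    ∀ t ∈ I, deriv ξ t = 1 / a3 t := by
  intro t ht
  have hmem : I ∈ nhds t := hIo.mem_nhds ht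
  -- differentiability
  have hdξ : DifferentiableAt ℝ ξ t :=
    (hsξ.contDiffAt hmem).differentiableAt (by simp)
  have hdp : DifferentiableAt ℝ (deriv a3) t :=
    ((hs3.deriv_of_isOpen hIo (m := 1) (WithTop.coe_le_coe.mpr le_top)).contDiffAt hmem).differentiableAt (by simp)
  set p := deriv a3 t with hp
  set q := deriv (deriv a3) t with hq
  set x := deriv ξ t with hx
  set E := Real.exp (ξ t) with hE
  set F := Real.exp (-(ξ t)) with hF
  set A := a3 t with hA
  have hξ' : HasDerivAt ξ x t := hdξ.hasDerivAt
  have hp' : HasDerivAt (deriv a3) q t := hdp.hasDerivAt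
  have hEd : HasDerivAt (fun s => Real.exp (ξ s)) (E * x) t := hξ'.exp
  have hFd : HasDerivAt (fun s => Real.exp (-(ξ s))) (F * (-x)) t := hξ'.neg.exp
  -- derivative of the formula for a1'
  have hf1 : HasDerivAt (fun s => e / 2 * ((1 - deriv a3 s) * Real.exp (ξ s)
      - (1 + deriv a3 s) * Real.exp (-(ξ s))))
      (e / 2 * (((-q) * E + (1 - p) * (E * x)) - (q * F + (1 + p) * (F * (-x))))) t := by
    exact ((((hasDerivAt_const t (1:ℝ)).sub hp').mul hEd).sub
      (((hasDerivAt_const t (1:ℝ)).add hp').mul hFd)).const_mul (e / 2) |>.congr_deriv (by simp only [Pi.sub_apply, Pi.add_apply, ← hE, ← hF, ← hp]; ring)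
  have hf2 : HasDerivAt (fun s => e / 2 * ((1 - deriv a3 s) * Real.exp (ξ s)
      + (1 + deriv a3 s) * Real.exp (-(ξ s))))
      (e / 2 * (((-q) * E + (1 - p) * (E * x)) + (q * F + (1 + p) * (F * (-x))))) t := by
    exact ((((hasDerivAt_const t (1:ℝ)).sub hp').mul hEd).add
      (((hasDerivAt_const t (1:ℝ)).add hp').mul hFd)).const_mul (e / 2) |>.congr_deriv (by simp only [Pi.sub_apply, Pi.add_apply, ← hE, ← hF, ← hp]; ring)
  -- deriv a1 agrees with the formula near t
  have hev1 : deriv a1 =ᶠ[nhds t] (fun s => e / 2 * ((1 - deriv a3 s) * Real.exp (ξ s)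
      - (1 + deriv a3 s) * Real.exp (-(ξ s)))) :=
    Filter.eventually_of_mem hmem ha1
  have hev2 : deriv a2 =ᶠ[nhds t] (fun s => e / 2 * ((1 - deriv a3 s) * Real.exp (ξ s)
      + (1 + deriv a3 s) * Real.exp (-(ξ s)))) :=
    Filter.eventually_of_mem hmem ha2
  have hda1 : deriv (deriv a1) t
      = e / 2 * (((-q) * E + (1 - p) * (E * x)) - (q * F + (1 + p) * (F * (-x)))) := by
    rw [hev1.deriv_eq]; exact hf1.deriv
  have hda2 : deriv (deriv a2) t
      = e / 2 * (((-q) * E + (1 - p) * (E * x)) + (q * F + (1 + p) * (F * (-x)))) := by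
    rw [hev2.deriv_eq]; exact hf2.deriv
  -- numerators are equal
  have hApos : 0 < A := hpos t ht
  have hsq : 0 < Real.sqrt (1 + (deriv a1 t) ^ 2) :=
    Real.sqrt_pos.mpr (by positivity)
  have hkey : deriv a1 t * p + A * deriv (deriv a1) t
      = deriv a2 t + A * (deriv (deriv a2) t * p - deriv a2 t * q) := by
    have h := heq t ht
    unfold hh1 hh2 at h
    rw [div_eq_div_iff (by positivity) (by positivity)] at h
    have h2 : -(deriv a1 t * p + A * deriv (deriv a1) t)
        = -(deriv a2 t + A * (deriv (deriv a2) t * p - deriv a2 t * q)) := by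
      have hD : (2 * A * Real.sqrt (1 + (deriv a1 t) ^ 2)) ≠ 0 := by positivity
      exact mul_right_cancel₀ hD h
    linarith
  -- substitute
  rw [ha1 t ht, ha2 t ht, hda1, hda2] at hkey
  -- the algebraic core
  have he' : e ≠ 0 := by rcases he with h | h <;> rw [h] <;> norm_num
  have hEpos : 0 < E := Real.exp_pos _
  have hFpos : 0 < F := Real.exp_pos _
  have hp1 : p ≠ 1 := fun h => hne t ht (by rw [← hp, h]; norm_num)
  have hp2 : p ≠ -1 := fun h => hne t ht (by rw [← hp, h]; norm_num)
  have hS : 0 < (1 - p) ^ 2 * E + (1 + p) ^ 2 * F := by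
    have h1 : 0 < (1 - p) ^ 2 := by
      have : (1 - p) ≠ 0 := sub_ne_zero_of_ne (fun h => hp1 h.symm)
      positivity
    have h2 : 0 < (1 + p) ^ 2 := by
      have : (1 + p) ≠ 0 := fun h => hp2 (by linarith [h])
      positivity
    exact add_pos (mul_pos h1 hEpos) (mul_pos h2 hFpos)
  have h0 : e / 2 * (A * x - 1) * ((1 - p) ^ 2 * E + (1 + p) ^ 2 * F) = 0 := by
    linear_combination hkey
  have h1 : A * x - 1 = 0 := by
    rcases mul_eq_zero.mp h0 with h | h
    · rcases mul_eq_zero.mp h with h | h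
      · exact absurd h (by positivity)
      · exact h
    · exact absurd h (ne_of_gt hS)
  rw [eq_div_iff (ne_of_gt hApos)]
  linarith
end
end

section
/- Suppose a unit spacelike curve α with α₃ > 0, (α₃')² ≠ 1, in the angle representation, has expansions satisfying h₁ = -h₂ on an interval. Then ξ'(t) = -1/α₃(t) - 2α₃''(t)/((α₃'(t))² - 1), and hence ξ(t) = -∫dt/α₃(t) - ln|(α₃'(t)-1)/(α₃'(t)+1)| up to an additive constant. -/
noncomputable section

/-- in the angle representation, if `h₁ = -h₂`, then
`ξ' = -1/α₃ - 2α₃''/((α₃')² - 1)` and hence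
`ξ = -∫dt/α₃ - ln|(α₃'-1)/(α₃'+1)|` up to an additive constant. -/
theorem stmt11 (I : Set ℝ) (hIo : IsOpen I) (hIc : Convex ℝ I)
    (a1 a2 a3 ξ Ξ : ℝ → ℝ) (e : ℝ) (he : e = 1 ∨ e = -1)
    (hs1 : ContDiffOn ℝ (⊤ : ℕ∞) a1 I) (hs2 : ContDiffOn ℝ (⊤ : ℕ∞) a2 I) (hs3 : ContDiffOn ℝ (⊤ : ℕ∞) a3 I)
    (hsξ : ContDiffOn ℝ (⊤ : ℕ∞) ξ I)
    (hpos : ∀ t ∈ I, 0 < a3 t)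
    (hne : ∀ t ∈ I, (deriv a3 t) ^ 2 ≠ 1)
    (hΞ : ∀ t ∈ I, HasDerivAt Ξ (1 / a3 t) t)
    (ha1 : ∀ t ∈ I, deriv a1 t = e / 2 * ((1 - deriv a3 t) * Real.exp (ξ t)
      - (1 + deriv a3 t) * Real.exp (-(ξ t))))
    (ha2 : ∀ t ∈ I, deriv a2 t = e / 2 * ((1 - deriv a3 t) * Real.exp (ξ t)
      + (1 + deriv a3 t) * Real.exp (-(ξ t))))
    (heq : ∀ t ∈ I, hh1 a1 a3 t = -(hh2 a1 a2 a3 t)) :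
    (∀ t ∈ I, deriv ξ t =
      -(1 / a3 t) - 2 * deriv (deriv a3) t / ((deriv a3 t) ^ 2 - 1)) ∧
    ∃ c : ℝ, ∀ t ∈ I,
      ξ t = -(Ξ t) - Real.log |(deriv a3 t - 1) / (deriv a3 t + 1)| + c := by
  have he0 : e ≠ 0 := by rcases he with h | h <;> rw [h] <;> norm_num
  have hd3 : ContDiffOn ℝ (⊤ : ℕ∞) (deriv a3) I := hs3.deriv_of_isOpen hIo (by simp)
  have hD3 : ∀ t ∈ I, HasDerivAt (deriv a3) (deriv (deriv a3) t) t := fun t ht =>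
    ((hd3.differentiableOn (by simp)).differentiableAt (hIo.mem_nhds ht)).hasDerivAt
  have hDξ : ∀ t ∈ I, HasDerivAt ξ (deriv ξ t) t := fun t ht =>
    ((hsξ.differentiableOn (by simp)).differentiableAt (hIo.mem_nhds ht)).hasDerivAt
  have hp1 : ∀ t ∈ I, deriv a3 t - 1 ≠ 0 := by
    intro t ht h
    have h1 : deriv a3 t = 1 := by linarith
    exact hne t ht (by rw [h1]; norm_num)
  have hp1' : ∀ t ∈ I, deriv a3 t + 1 ≠ 0 := by
    intro t ht h
    have h1 : deriv a3 t = -1 := by linarith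
    exact hne t ht (by rw [h1]; norm_num)
  have main : ∀ t ∈ I, deriv ξ t =
      -(1 / a3 t) - 2 * deriv (deriv a3) t / ((deriv a3 t) ^ 2 - 1) := by
    intro t ht
    have hmem := hIo.mem_nhds ht
    have hd3t := hD3 t ht
    have hξt := hDξ t ht
    have hE : HasDerivAt (fun s => Real.exp (ξ s)) (Real.exp (ξ t) * deriv ξ t) t := hξt.exp
    have hEi : HasDerivAt (fun s => Real.exp (-(ξ s))) (Real.exp (-(ξ t)) * -deriv ξ t) t :=
      hξt.neg.exp
    have hmul1 : HasDerivAt (fun s => (1 - deriv a3 s) * Real.exp (ξ s))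
        (-deriv (deriv a3) t * Real.exp (ξ t)
          + (1 - deriv a3 t) * (Real.exp (ξ t) * deriv ξ t)) t :=
      (hd3t.const_sub 1).mul hE
    have hmul2 : HasDerivAt (fun s => (1 + deriv a3 s) * Real.exp (-(ξ s)))
        (deriv (deriv a3) t * Real.exp (-(ξ t))
          + (1 + deriv a3 t) * (Real.exp (-(ξ t)) * -deriv ξ t)) t :=
      (hd3t.const_add 1).mul hEi
    have hF1 : HasDerivAt (fun s => e / 2 * ((1 - deriv a3 s) * Real.exp (ξ s)
        - (1 + deriv a3 s) * Real.exp (-(ξ s))))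
        (e / 2 * ((-deriv (deriv a3) t * Real.exp (ξ t)
            + (1 - deriv a3 t) * (Real.exp (ξ t) * deriv ξ t))
          - (deriv (deriv a3) t * Real.exp (-(ξ t))
            + (1 + deriv a3 t) * (Real.exp (-(ξ t)) * -deriv ξ t)))) t :=
      (hmul1.sub hmul2).const_mul (e / 2)
    have hF2 : HasDerivAt (fun s => e / 2 * ((1 - deriv a3 s) * Real.exp (ξ s)
        + (1 + deriv a3 s) * Real.exp (-(ξ s))))
        (e / 2 * ((-deriv (deriv a3) t * Real.exp (ξ t)
            + (1 - deriv a3 t) * (Real.exp (ξ t) * deriv ξ t))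
          + (deriv (deriv a3) t * Real.exp (-(ξ t))
            + (1 + deriv a3 t) * (Real.exp (-(ξ t)) * -deriv ξ t)))) t :=
      (hmul1.add hmul2).const_mul (e / 2)
    have hda1 : deriv (deriv a1) t = e / 2 * ((-deriv (deriv a3) t * Real.exp (ξ t)
            + (1 - deriv a3 t) * (Real.exp (ξ t) * deriv ξ t))
          - (deriv (deriv a3) t * Real.exp (-(ξ t))
            + (1 + deriv a3 t) * (Real.exp (-(ξ t)) * -deriv ξ t))) := by
      rw [Filter.EventuallyEq.deriv_eq (Filter.eventuallyEq_of_mem hmem ha1)]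
      exact hF1.deriv
    have hda2 : deriv (deriv a2) t = e / 2 * ((-deriv (deriv a3) t * Real.exp (ξ t)
            + (1 - deriv a3 t) * (Real.exp (ξ t) * deriv ξ t))
          + (deriv (deriv a3) t * Real.exp (-(ξ t))
            + (1 + deriv a3 t) * (Real.exp (-(ξ t)) * -deriv ξ t))) := by
      rw [Filter.EventuallyEq.deriv_eq (Filter.eventuallyEq_of_mem hmem ha2)]
      exact hF2.deriv
    have ha30 : a3 t ≠ 0 := (hpos t ht).ne'
    have hsq : (0:ℝ) < Real.sqrt (1 + (deriv a1 t) ^ 2) :=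
      Real.sqrt_pos.mpr (by positivity)
    have hDne : 2 * a3 t * Real.sqrt (1 + (deriv a1 t) ^ 2) ≠ 0 := by
      have := hpos t ht; positivity
    have heqt := heq t ht
    unfold hh1 hh2 at heqt
    rw [show -(-(deriv a2 t + a3 t * (deriv (deriv a2) t * deriv a3 t
          - deriv a2 t * deriv (deriv a3) t)) /
        (2 * a3 t * Real.sqrt (1 + (deriv a1 t) ^ 2)))
      = (deriv a2 t + a3 t * (deriv (deriv a2) t * deriv a3 t
          - deriv a2 t * deriv (deriv a3) t)) /
        (2 * a3 t * Real.sqrt (1 + (deriv a1 t) ^ 2)) from by ring] at heqt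
    have key : -(deriv a1 t * deriv a3 t + a3 t * deriv (deriv a1) t)
        = deriv a2 t + a3 t * (deriv (deriv a2) t * deriv a3 t
            - deriv a2 t * deriv (deriv a3) t) := by
      rw [div_eq_div_iff hDne hDne] at heqt
      exact mul_right_cancel₀ hDne heqt
    rw [ha1 t ht, ha2 t ht, hda1, hda2] at key
    have hP : (1 - (deriv a3 t) ^ 2) * (1 + a3 t * deriv ξ t)
        - 2 * a3 t * deriv (deriv a3) t = 0 := by
      have h2 : e / 2 * (Real.exp (ξ t) + Real.exp (-(ξ t))) *
          ((1 - (deriv a3 t) ^ 2) * (1 + a3 t * deriv ξ t)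
            - 2 * a3 t * deriv (deriv a3) t) = 0 := by
        linear_combination -key
      have hc : e / 2 * (Real.exp (ξ t) + Real.exp (-(ξ t))) ≠ 0 := by
        have h1 : (0:ℝ) < Real.exp (ξ t) + Real.exp (-(ξ t)) := by positivity
        exact mul_ne_zero (div_ne_zero he0 two_ne_zero) h1.ne'
      exact (mul_eq_zero.mp h2).resolve_left hc
    have hp2 : (deriv a3 t) ^ 2 - 1 ≠ 0 := sub_ne_zero.mpr (hne t ht)
    field_simp
    linear_combination -hP
  refine ⟨main, ?_⟩
  rcases Set.eq_empty_or_nonempty I with hI | ⟨t0, ht0⟩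
  · exact ⟨0, by simp [hI]⟩
  · set g : ℝ → ℝ := fun s =>
      ξ s + Ξ s + (Real.log (deriv a3 s - 1) - Real.log (deriv a3 s + 1)) with hg
    have hg0 : ∀ t ∈ I, HasDerivAt g 0 t := by
      intro t ht
      have hgt : HasDerivAt g (deriv ξ t + 1 / a3 t +
          (deriv (deriv a3) t / (deriv a3 t - 1)
            - deriv (deriv a3) t / (deriv a3 t + 1))) t :=
        ((hDξ t ht).add (hΞ t ht)).add
          ((((hD3 t ht).sub_const 1).log (hp1 t ht)).sub
            (((hD3 t ht).add_const 1).log (hp1' t ht)))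
      have hstep : deriv (deriv a3) t / (deriv a3 t - 1)
          - deriv (deriv a3) t / (deriv a3 t + 1)
          = 2 * deriv (deriv a3) t / ((deriv a3 t) ^ 2 - 1) := by
        rw [div_sub_div _ _ (hp1 t ht) (hp1' t ht),
          show (deriv a3 t - 1) * (deriv a3 t + 1) = (deriv a3 t) ^ 2 - 1 by ring]
        congr 1; ring
      have hz : deriv ξ t + 1 / a3 t +
          (deriv (deriv a3) t / (deriv a3 t - 1)
            - deriv (deriv a3) t / (deriv a3 t + 1)) = 0 := by
        rw [main t ht, hstep]
        ring
      rwa [hz] at hgt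
    have hgdiff : DifferentiableOn ℝ g I := fun t ht =>
      ((hg0 t ht).differentiableAt).differentiableWithinAt
    have hgf : ∀ t ∈ I, fderivWithin ℝ g I t = 0 := by
      intro t ht
      rw [fderivWithin_of_isOpen hIo ht, (hg0 t ht).hasFDerivAt.fderiv]
      ext y; simp
    refine ⟨ξ t0 + Ξ t0 + (Real.log (deriv a3 t0 - 1) - Real.log (deriv a3 t0 + 1)),
      fun t ht => ?_⟩
    have hc : g t = g t0 := hIc.is_const_of_fderivWithin_eq_zero hgdiff hgf ht ht0
    rw [Real.log_abs, Real.log_div (hp1 t ht) (hp1' t ht)]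
    simp only [hg] at hc
    linarith
end
end

section
/- Let α and β be two type B profile curves with the same third coordinate function α₃ = β₃ (with possibly different integration constants and signs). Then there exist c₀ ∈ ℝ and ε̃₁, ε̃₂ ∈ {-1,1} such that (β₁', β₂') = (α₁', α₂') · diag(ε̃₁, ε̃₂) · [[cosh c₀, sinh c₀],[sinh c₀, cosh c₀]]; consequently there is an affine isometry F of Minkowski 4-space (a Lorentz boost in the (x₁,x₂)-plane composed with sign changes and a translation) with F ∘ α = β. -/
noncomputable section

private lemma aux_const12 {I : Set ℝ} (hIc : Convex ℝ I) {g : ℝ → ℝ}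
    (hg : ∀ t ∈ I, HasDerivAt g 0 t) {s t : ℝ} (hs : s ∈ I) (ht : t ∈ I) : g t = g s := by
  have h := Convex.norm_image_sub_le_of_norm_hasDerivWithin_le (f' := fun _ => (0 : ℝ)) (C := 0)
    (fun x hx => (hg x hx).hasDerivWithinAt) (fun x hx => by simp) hIc hs ht
  simp only [zero_mul] at h
  exact sub_eq_zero.mp (norm_eq_zero.mp (le_antisymm h (norm_nonneg _)))

/-- two type B profile curves with the same third coordinate differ by a
sign change and a Lorentz boost in the `(x₁,x₂)`-plane; consequently they are congruent
by an affine isometry of Minkowski 4-space. -/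
theorem stmt12 (I : Set ℝ) (hIo : IsOpen I) (hIc : Convex ℝ I)
    (a1 a2 a3 b1 b2 ξa ξb : ℝ → ℝ) (e1 e2 d1 d2 : ℝ)
    (he1 : e1 = 1 ∨ e1 = -1) (he2 : e2 = 1 ∨ e2 = -1)
    (hd1 : d1 = 1 ∨ d1 = -1) (hd2 : d2 = 1 ∨ d2 = -1)
    (hs3 : ContDiffOn ℝ (⊤ : ℕ∞) a3 I) (hpos : ∀ t ∈ I, 0 < a3 t)
    (hsa1 : ContDiffOn ℝ (⊤ : ℕ∞) a1 I) (hsa2 : ContDiffOn ℝ (⊤ : ℕ∞) a2 I)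
    (hsb1 : ContDiffOn ℝ (⊤ : ℕ∞) b1 I) (hsb2 : ContDiffOn ℝ (⊤ : ℕ∞) b2 I)
    (hξa : ∀ t ∈ I, HasDerivAt ξa (1 / a3 t) t)
    (hξb : ∀ t ∈ I, HasDerivAt ξb (1 / a3 t) t)
    (ha1 : ∀ t ∈ I, deriv a1 t = e1 * (Real.sinh (ξa t) - deriv a3 t * Real.cosh (ξa t)))
    (ha2 : ∀ t ∈ I, deriv a2 t = e2 * (Real.cosh (ξa t) - deriv a3 t * Real.sinh (ξa t)))
    (hb1 : ∀ t ∈ I, deriv b1 t = d1 * (Real.sinh (ξb t) - deriv a3 t * Real.cosh (ξb t)))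
    (hb2 : ∀ t ∈ I, deriv b2 t = d2 * (Real.cosh (ξb t) - deriv a3 t * Real.sinh (ξb t))) :
    ∃ c0 f1 f2 : ℝ, (f1 = 1 ∨ f1 = -1) ∧ (f2 = 1 ∨ f2 = -1) ∧
      (∀ t ∈ I,
        deriv b1 t = f1 * deriv a1 t * Real.cosh c0 + f2 * deriv a2 t * Real.sinh c0 ∧
        deriv b2 t = f1 * deriv a1 t * Real.sinh c0 + f2 * deriv a2 t * Real.cosh c0) ∧
      ∃ (A : Matrix (Fin 4) (Fin 4) ℝ) (v : Fin 4 → ℝ),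
        (∀ x y : Fin 4 → ℝ, mink (A.mulVec x) (A.mulVec y) = mink x y) ∧
        ∀ t ∈ I, A.mulVec ![a1 t, a2 t, a3 t, 0] + v = ![b1 t, b2 t, a3 t, 0] := by
  rcases Set.eq_empty_or_nonempty I with hI | ⟨t0, ht0⟩
  · refine ⟨0, 1, 1, Or.inl rfl, Or.inl rfl, ?_, 1, 0, ?_, ?_⟩
    · intro t ht; rw [hI] at ht; exact absurd ht (Set.notMem_empty t)
    · intro x y; simp [Matrix.one_mulVec]
    · intro t ht; rw [hI] at ht; exact absurd ht (Set.notMem_empty t)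
  · set cc : ℝ := d1 * d2 * (ξb t0 - ξa t0) with hcc
    set C : ℝ := Real.cosh cc with hCdef
    set S : ℝ := Real.sinh cc with hSdef
    set F1 : ℝ := d1 * e1 with hF1def
    set F2 : ℝ := d2 * e2 with hF2def
    have hξ : ∀ t ∈ I, ξb t = ξa t + (ξb t0 - ξa t0) := by
      intro t ht
      have hconst : (fun t => ξb t - ξa t) t = (fun t => ξb t - ξa t) t0 :=
        aux_const12 hIc (fun x hx => by simpa using (hξb x hx).sub (hξa x hx)) ht0 ht
      simp only at hconst
      linarith
    have hcosh : C = Real.cosh (ξb t0 - ξa t0) := by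
      rw [hCdef, hcc]
      rcases hd1 with rfl | rfl <;> rcases hd2 with rfl | rfl <;>
        norm_num [Real.cosh_neg] <;> rw [← neg_sub (ξb t0), Real.cosh_neg]
    have hsinh : S = d1 * d2 * Real.sinh (ξb t0 - ξa t0) := by
      rw [hSdef, hcc]
      rcases hd1 with rfl | rfl <;> rcases hd2 with rfl | rfl <;>
        norm_num [Real.sinh_neg] <;> rw [← neg_sub (ξb t0), Real.sinh_neg]
    have hf1 : F1 = 1 ∨ F1 = -1 := by
      rw [hF1def]
      rcases hd1 with rfl | rfl <;> rcases he1 with rfl | rfl <;> norm_num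
    have hf2 : F2 = 1 ∨ F2 = -1 := by
      rw [hF2def]
      rcases hd2 with rfl | rfl <;> rcases he2 with rfl | rfl <;> norm_num
    have hkey : ∀ t ∈ I,
        deriv b1 t = F1 * deriv a1 t * Real.cosh cc + F2 * deriv a2 t * Real.sinh cc ∧
        deriv b2 t = F1 * deriv a1 t * Real.sinh cc + F2 * deriv a2 t * Real.cosh cc := by
      intro t ht
      rw [← hCdef, ← hSdef, hcosh, hsinh, hb1 t ht, hb2 t ht, ha1 t ht, ha2 t ht, hξ t ht,
        Real.sinh_add, Real.cosh_add, hF1def, hF2def]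
      rcases he1 with rfl | rfl <;> rcases he2 with rfl | rfl <;>
        rcases hd1 with rfl | rfl <;> rcases hd2 with rfl | rfl <;>
        exact ⟨by ring, by ring⟩
    have hF1sq : F1 * F1 = 1 := by rcases hf1 with h | h <;> rw [h] <;> norm_num
    have hF2sq : F2 * F2 = 1 := by rcases hf2 with h | h <;> rw [h] <;> norm_num
    have hcs : C ^ 2 - S ^ 2 = 1 := Real.cosh_sq_sub_sinh_sq cc
    refine ⟨cc, F1, F2, hf1, hf2, hkey,
      Matrix.of ![![F1 * C, F2 * S, 0, 0], ![F1 * S, F2 * C, 0, 0],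
        ![0, 0, 1, 0], ![0, 0, 0, 1]],
      ![b1 t0 - (F1 * C * a1 t0 + F2 * S * a2 t0),
        b2 t0 - (F1 * S * a1 t0 + F2 * C * a2 t0), 0, 0], ?_, ?_⟩
    · intro x y
      simp only [mink, Matrix.mulVec, dotProduct, Fin.sum_univ_four, Matrix.of_apply,
        Matrix.cons_val', Matrix.cons_val_zero, Matrix.cons_val_one, Matrix.head_cons,
        Matrix.cons_val_two, Matrix.cons_val_three, Matrix.tail_cons, Matrix.head_fin_const,
        Matrix.empty_val', Matrix.cons_val_fin_one]
      have hA1 : F1 * F1 * C ^ 2 - F1 * F1 * S ^ 2 = 1 := by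
        linear_combination F1 * F1 * hcs + hF1sq
      have hA2 : F2 * F2 * C ^ 2 - F2 * F2 * S ^ 2 = 1 := by
        linear_combination F2 * F2 * hcs + hF2sq
      linear_combination (-(x 0 * y 0)) * hA1 + (x 1 * y 1) * hA2
    · have hderivs : ∀ x ∈ I, HasDerivAt b1 (deriv b1 x) x ∧ HasDerivAt b2 (deriv b2 x) x ∧
          HasDerivAt a1 (deriv a1 x) x ∧ HasDerivAt a2 (deriv a2 x) x := by
        intro x hx
        exact ⟨((hsb1.differentiableOn (by simp)).differentiableAt (hIo.mem_nhds hx)).hasDerivAt,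
          ((hsb2.differentiableOn (by simp)).differentiableAt (hIo.mem_nhds hx)).hasDerivAt,
          ((hsa1.differentiableOn (by simp)).differentiableAt (hIo.mem_nhds hx)).hasDerivAt,
          ((hsa2.differentiableOn (by simp)).differentiableAt (hIo.mem_nhds hx)).hasDerivAt⟩
      have hc1 : ∀ t ∈ I, b1 t - (F1 * C * a1 t + F2 * S * a2 t) =
          b1 t0 - (F1 * C * a1 t0 + F2 * S * a2 t0) := by
        intro t ht
        refine aux_const12 hIc (g := fun t => b1 t - (F1 * C * a1 t + F2 * S * a2 t))
          (fun x hx => ?_) ht0 ht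
        obtain ⟨hB1, _, hA1, hA2⟩ := hderivs x hx
        have h := hB1.sub ((hA1.const_mul (F1 * C)).add (hA2.const_mul (F2 * S)))
        have h0 : deriv b1 x - (F1 * C * deriv a1 x + F2 * S * deriv a2 x) = 0 := by
          rw [(hkey x hx).1]; ring
        exact h0 ▸ h
      have hc2 : ∀ t ∈ I, b2 t - (F1 * S * a1 t + F2 * C * a2 t) =
          b2 t0 - (F1 * S * a1 t0 + F2 * C * a2 t0) := by
        intro t ht
        refine aux_const12 hIc (g := fun t => b2 t - (F1 * S * a1 t + F2 * C * a2 t))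
          (fun x hx => ?_) ht0 ht
        obtain ⟨_, hB2, hA1, hA2⟩ := hderivs x hx
        have h := hB2.sub ((hA1.const_mul (F1 * S)).add (hA2.const_mul (F2 * C)))
        have h0 : deriv b2 x - (F1 * S * deriv a1 x + F2 * C * deriv a2 x) = 0 := by
          rw [(hkey x hx).2]; ring
        exact h0 ▸ h
      intro t ht
      funext i
      fin_cases i
      · simp [Matrix.mulVec, dotProduct, Fin.sum_univ_four]
        linarith [hc1 t ht]
      · simp [Matrix.mulVec, dotProduct, Fin.sum_univ_four]
        linarith [hc2 t ht]
      · simp [Matrix.mulVec, dotProduct, Fin.sum_univ_four]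
      · simp [Matrix.mulVec, dotProduct, Fin.sum_univ_four]
end
end

section
/- For any smooth function κ : I → ℝ and t₀ ∈ I, there exist δ > 0 and a smooth positive function α₃ on (t₀ - δ, t₀ + δ) satisfying α₃''(t) = -κ(t)α₃(t); consequently there exists a unit spacelike curve α = (α₁, α₂, α₃, 0) (given by the type B formulas) whose associated rotation surface has lightlike-or-zero mean curvature vector and Gaussian curvature κ(t) at each point (t, θ). -/
noncomputable section
open FormalMultilinearSeries
open scoped ENNReal NNReal Topology

/-- Power series coefficients of the solution of `y'' = -κ y`, `y 0 = 1`, `y' 0 = 0`. -/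
def sol (k : ℕ → ℝ) : ℕ → ℝ
  | 0 => 1
  | 1 => 0
  | (n+2) => -(∑ j ∈ Finset.range (n+1), k j * sol k (n - j)) / ((n+1)*(n+2))
  decreasing_by omega

lemma exists_ode_sol (κ : ℝ → ℝ) (hκ : ContDiff ℝ (⊤ : ℕ∞) κ) (t0 : ℝ) :
    ∃ δ > 0, ∃ y : ℝ → ℝ,
      ContDiffOn ℝ (⊤ : ℕ∞) y (Set.Ioo (t0 - δ) (t0 + δ)) ∧
      (∀ t ∈ Set.Ioo (t0 - δ) (t0 + δ), 0 < y t) ∧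
      (∀ t ∈ Set.Ioo (t0 - δ) (t0 + δ), DifferentiableAt ℝ y t) ∧
      (∀ t ∈ Set.Ioo (t0 - δ) (t0 + δ), DifferentiableAt ℝ (deriv y) t) ∧
      (∀ t ∈ Set.Ioo (t0 - δ) (t0 + δ), deriv (deriv y) t = -(κ t) * y t) := by
  set F : ℝ × ℝ × ℝ → ℝ × ℝ × ℝ := fun v => (1, v.2.2, -(κ v.1) * v.2.1) with hF
  have hFc : ContDiff ℝ (⊤ : ℕ∞) F := by
    have hκ' : ContDiff ℝ (⊤ : ℕ∞) (fun v : ℝ × ℝ × ℝ => κ v.1) := hκ.comp contDiff_fst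
    exact contDiff_const.prodMk ((contDiff_snd.comp contDiff_snd).prodMk
      (hκ'.neg.mul (contDiff_fst.comp contDiff_snd)))
  have hFn : ∀ n : ℕ, ContDiff ℝ n F := fun n => hFc.of_le (by exact_mod_cast le_top)
  have hF1 : ContDiffAt ℝ 1 F (t0, 1, 0) := by
    have := (hFn 1).contDiffAt (x := ((t0, 1, 0) : ℝ × ℝ × ℝ)); exact_mod_cast this
  obtain ⟨α, hα0, ε, hε, hα⟩ :=
    hF1.exists_forall_mem_closedBall_exists_eq_forall_mem_Ioo_hasDerivAt₀ t0
  have hIo : IsOpen (Set.Ioo (t0 - ε) (t0 + ε)) := isOpen_Ioo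
  have ht0I : t0 ∈ Set.Ioo (t0 - ε) (t0 + ε) := ⟨by linarith, by linarith⟩
  have hfst : ∀ t ∈ Set.Ioo (t0 - ε) (t0 + ε), (α t).1 = t := by
    have hc : ∀ t ∈ Set.Ioo (t0 - ε) (t0 + ε), HasDerivAt (fun u => (α u).1 - u) 0 t := by
      intro t ht
      have h1 : HasDerivAt (fun u => (α u).1) 1 t := by
        have h := hasFDerivAt_fst.comp_hasDerivAt t (hα t ht); exact h
      have h2 := h1.sub (hasDerivAt_id' t)
      rwa [sub_self] at h2
    intro t ht
    have hconst := hIo.is_const_of_deriv_eq_zero isPreconnected_Ioo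
      (fun u hu => (hc u hu).differentiableAt.differentiableWithinAt)
      (fun u hu => (hc u hu).deriv) ht ht0I
    simp only [hα0] at hconst
    linarith
  set y : ℝ → ℝ := fun t => (α t).2.1 with hy_def
  set z : ℝ → ℝ := fun t => (α t).2.2 with hz_def
  have hy : ∀ t ∈ Set.Ioo (t0 - ε) (t0 + ε), HasDerivAt y (z t) t := by
    intro t ht
    have h1 := (hasFDerivAt_fst.comp (α t) hasFDerivAt_snd).comp_hasDerivAt t (hα t ht)
    exact h1
  have hz : ∀ t ∈ Set.Ioo (t0 - ε) (t0 + ε), HasDerivAt z (-(κ t) * y t) t := by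
    intro t ht
    have h1 := (hasFDerivAt_snd.comp (α t) hasFDerivAt_snd).comp_hasDerivAt t (hα t ht)
    have h2 : (F (α t)).2.2 = -(κ t) * y t := by simp only [F, y, hfst t ht]
    rw [← h2]
    exact h1
  have hαc : ∀ n : ℕ, ContDiffOn ℝ n α (Set.Ioo (t0 - ε) (t0 + ε)) := by
    intro n
    induction n with
    | zero =>
      exact contDiffOn_zero.mpr (fun t ht => (hα t ht).continuousAt.continuousWithinAt)
    | succ n ih =>
      rw [Nat.cast_succ, contDiffOn_succ_iff_deriv_of_isOpen hIo]
      refine ⟨fun t ht => (hα t ht).differentiableAt.differentiableWithinAt, by simp, ?_⟩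
      have h1 : ContDiffOn ℝ n (F ∘ α) (Set.Ioo (t0 - ε) (t0 + ε)) :=
        (hFn n).comp_contDiffOn ih
      exact h1.congr (fun t ht => (hα t ht).deriv)
  have hαinf : ContDiffOn ℝ (⊤ : ℕ∞) α (Set.Ioo (t0 - ε) (t0 + ε)) := contDiffOn_infty.mpr hαc
  have hycd : ContDiffOn ℝ (⊤ : ℕ∞) y (Set.Ioo (t0 - ε) (t0 + ε)) :=
    (contDiff_fst.comp contDiff_snd).comp_contDiffOn hαinf
  have hy0 : y t0 = 1 := by simp [y, hα0]
  have hpos_ev : ∀ᶠ t in 𝓝 t0, 0 < y t := by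
    have h1 : ∀ᶠ v in 𝓝 (y t0), (0:ℝ) < v := by
      rw [hy0]; exact eventually_gt_nhds one_pos
    exact (hy t0 ht0I).continuousAt.eventually h1
  obtain ⟨δ', hδ'0, hδ'⟩ := Metric.eventually_nhds_iff.mp hpos_ev
  have hsub : Set.Ioo (t0 - min ε δ') (t0 + min ε δ') ⊆ Set.Ioo (t0 - ε) (t0 + ε) :=
    fun t ht => ⟨by linarith [min_le_left ε δ', ht.1], by linarith [min_le_left ε δ', ht.2]⟩
  have hev : ∀ t ∈ Set.Ioo (t0 - ε) (t0 + ε), deriv y =ᶠ[𝓝 t] z := fun t ht =>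
    Filter.eventuallyEq_of_mem (hIo.mem_nhds ht) (fun u hu => (hy u hu).deriv)
  refine ⟨min ε δ', lt_min hε hδ'0, y, hycd.mono hsub, ?_, ?_, ?_, ?_⟩
  · intro t ht
    apply hδ'
    rw [Real.dist_eq]
    exact lt_of_lt_of_le (abs_sub_lt_iff.mpr ⟨by linarith [ht.2], by linarith [ht.1]⟩)
      (min_le_right _ _)
  · intro t ht
    exact (hy t (hsub ht)).differentiableAt
  · intro t ht
    exact (hz t (hsub ht)).differentiableAt.congr_of_eventuallyEq (hev t (hsub ht))
  · intro t ht
    rw [(hev t (hsub ht)).deriv_eq, (hz t (hsub ht)).deriv]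

lemma ftc_hasDerivAt {g : ℝ → ℝ} {s : Set ℝ} (hs : IsOpen s) (hconn : s.OrdConnected)
    (hg : ContinuousOn g s) {a t : ℝ} (ha : a ∈ s) (ht : t ∈ s) :
    HasDerivAt (fun u => ∫ x in a..u, g x) (g t) t := by
  apply intervalIntegral.integral_hasDerivAt_right
  · exact (hg.mono (hconn.uIcc_subset ha ht)).intervalIntegrable
  · exact hg.stronglyMeasurableAtFilter hs t ht
  · exact hg.continuousAt (hs.mem_nhds ht)

lemma mink_add_smul (a b : ℝ) (u v : Fin 4 → ℝ) :
    mink (a • u + b • v) (a • u + b • v)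
      = a^2 * mink u u + 2*a*b* mink u v + b^2 * mink v v := by
  simp only [mink, Pi.add_apply, Pi.smul_apply, smul_eq_mul]
  ring

lemma mink_etas (a1 a2 a3 : ℝ → ℝ) (t θ : ℝ)
    (hunit : (deriv a2 t)^2 + (deriv a3 t)^2 = 1 + (deriv a1 t)^2) :
    mink (eta1 a1 a2 a3 t θ) (eta1 a1 a2 a3 t θ) = -1 ∧
    mink (eta2 a1 a2 a3 t θ) (eta2 a1 a2 a3 t θ) = 1 ∧
    mink (eta1 a1 a2 a3 t θ) (eta2 a1 a2 a3 t θ) = 0 := by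
  set p1 := deriv a1 t
  set p2 := deriv a2 t
  set p3 := deriv a3 t
  have h1p : (0:ℝ) < 1 + p1^2 := by positivity
  have hs2 : Real.sqrt (1+p1^2)^2 = 1+p1^2 := Real.sq_sqrt h1p.le
  have hs0 : Real.sqrt (1+p1^2) ≠ 0 := ne_of_gt (Real.sqrt_pos.mpr h1p)
  have hcs : Real.sin θ^2 + Real.cos θ^2 = 1 := Real.sin_sq_add_cos_sq θ
  refine ⟨?_, ?_, ?_⟩
  · simp only [mink, eta1, eta2, Pi.smul_apply, smul_eq_mul, Matrix.cons_val_zero,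
      Matrix.cons_val_one, Matrix.head_cons, Matrix.cons_val_two, Matrix.cons_val_three,
      Matrix.tail_cons]
    field_simp
    linear_combination (p1^2) * hunit + (p1^2*p3^2) * hcs + hs2
  · simp only [mink, eta1, eta2, Pi.smul_apply, smul_eq_mul, Matrix.cons_val_zero,
      Matrix.cons_val_one, Matrix.head_cons, Matrix.cons_val_two, Matrix.cons_val_three,
      Matrix.tail_cons]
    field_simp
    linear_combination hunit + p2^2 * hcs - hs2
  · simp only [mink, eta1, eta2, Pi.smul_apply, smul_eq_mul, Matrix.cons_val_zero,
      Matrix.cons_val_one, Matrix.head_cons, Matrix.cons_val_two, Matrix.cons_val_three,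
      Matrix.tail_cons]
    field_simp
    linear_combination (p1*p2*p3) * hcs

/-- for any smooth prescribed curvature `κ` there is locally a type B
rotation surface, generated by a unit spacelike curve, with lightlike-or-zero mean
curvature vector and Gaussian curvature `κ(t)` at every point. -/
theorem stmt19 (κ : ℝ → ℝ) (hκ : ContDiff ℝ (⊤ : ℕ∞) κ) (t0 : ℝ) :
    ∃ δ > 0, ∃ a1 a2 a3 ξ : ℝ → ℝ, ∃ e1 e2 : ℝ,
      (e1 = 1 ∨ e1 = -1) ∧ (e2 = 1 ∨ e2 = -1) ∧
      ContDiffOn ℝ (⊤ : ℕ∞) a3 (Set.Ioo (t0 - δ) (t0 + δ)) ∧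
      (∀ t ∈ Set.Ioo (t0 - δ) (t0 + δ), 0 < a3 t) ∧
      (∀ t ∈ Set.Ioo (t0 - δ) (t0 + δ), deriv (deriv a3) t = -(κ t) * a3 t) ∧
      (∀ t ∈ Set.Ioo (t0 - δ) (t0 + δ), deriv ξ t = 1 / a3 t) ∧
      (∀ t ∈ Set.Ioo (t0 - δ) (t0 + δ),
        deriv a1 t = e1 * (Real.sinh (ξ t) - deriv a3 t * Real.cosh (ξ t))) ∧
      (∀ t ∈ Set.Ioo (t0 - δ) (t0 + δ),
        deriv a2 t = e2 * (Real.cosh (ξ t) - deriv a3 t * Real.sinh (ξ t))) ∧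
      (∀ t ∈ Set.Ioo (t0 - δ) (t0 + δ),
        -(deriv a1 t) ^ 2 + (deriv a2 t) ^ 2 + (deriv a3 t) ^ 2 = 1) ∧
      (∀ t ∈ Set.Ioo (t0 - δ) (t0 + δ), ∀ θ : ℝ,
        mink (Hvec a1 a2 a3 t θ) (Hvec a1 a2 a3 t θ) = 0) ∧
      (∀ t ∈ Set.Ioo (t0 - δ) (t0 + δ), -(deriv (deriv a3) t) / a3 t = κ t) := by
  obtain ⟨δ, hδ, y, hy_cd, hy_pos, hy_an, hy'_an, hy_ode⟩ := exists_ode_sol κ hκ t0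
  have hJopen : IsOpen (Set.Ioo (t0 - δ) (t0 + δ)) := isOpen_Ioo
  have hJconn : (Set.Ioo (t0 - δ) (t0 + δ)).OrdConnected := Set.ordConnected_Ioo
  have ht0J : t0 ∈ Set.Ioo (t0 - δ) (t0 + δ) := ⟨by linarith, by linarith⟩
  have hy_ne : ∀ t ∈ Set.Ioo (t0 - δ) (t0 + δ), y t ≠ 0 := fun t ht => (hy_pos t ht).ne'
  have hy_cont : ContinuousOn y (Set.Ioo (t0 - δ) (t0 + δ)) :=
    fun t ht => (hy_an t ht).continuousAt.continuousWithinAt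
  have hz_cont : ContinuousOn (deriv y) (Set.Ioo (t0 - δ) (t0 + δ)) :=
    fun t ht => (hy'_an t ht).continuousAt.continuousWithinAt
  have hinv_cont : ContinuousOn (fun x => (y x)⁻¹) (Set.Ioo (t0 - δ) (t0 + δ)) :=
    hy_cont.inv₀ hy_ne
  set ξ : ℝ → ℝ := fun u => ∫ x in t0..u, (y x)⁻¹ with hξ_def
  have hξ_d : ∀ t ∈ Set.Ioo (t0 - δ) (t0 + δ), HasDerivAt ξ ((y t)⁻¹) t :=
    fun t ht => ftc_hasDerivAt hJopen hJconn hinv_cont ht0J ht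
  have hξ_cont : ContinuousOn ξ (Set.Ioo (t0 - δ) (t0 + δ)) :=
    fun t ht => (hξ_d t ht).continuousAt.continuousWithinAt
  set g1 : ℝ → ℝ := fun u => Real.sinh (ξ u) - deriv y u * Real.cosh (ξ u) with hg1_def
  set g2 : ℝ → ℝ := fun u => Real.cosh (ξ u) - deriv y u * Real.sinh (ξ u) with hg2_def
  have hg1_cont : ContinuousOn g1 (Set.Ioo (t0 - δ) (t0 + δ)) :=
    (Real.continuous_sinh.comp_continuousOn hξ_cont).sub
      (hz_cont.mul (Real.continuous_cosh.comp_continuousOn hξ_cont))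
  have hg2_cont : ContinuousOn g2 (Set.Ioo (t0 - δ) (t0 + δ)) :=
    (Real.continuous_cosh.comp_continuousOn hξ_cont).sub
      (hz_cont.mul (Real.continuous_sinh.comp_continuousOn hξ_cont))
  set a1 : ℝ → ℝ := fun u => ∫ x in t0..u, g1 x with ha1_def
  set a2 : ℝ → ℝ := fun u => ∫ x in t0..u, g2 x with ha2_def
  have ha1_d : ∀ t ∈ Set.Ioo (t0 - δ) (t0 + δ), HasDerivAt a1 (g1 t) t :=
    fun t ht => ftc_hasDerivAt hJopen hJconn hg1_cont ht0J ht
  have ha2_d : ∀ t ∈ Set.Ioo (t0 - δ) (t0 + δ), HasDerivAt a2 (g2 t) t :=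
    fun t ht => ftc_hasDerivAt hJopen hJconn hg2_cont ht0J ht
  have hda1 : ∀ t ∈ Set.Ioo (t0 - δ) (t0 + δ), deriv a1 t = g1 t :=
    fun t ht => (ha1_d t ht).deriv
  have hda2 : ∀ t ∈ Set.Ioo (t0 - δ) (t0 + δ), deriv a2 t = g2 t :=
    fun t ht => (ha2_d t ht).deriv
  have hdξ : ∀ t ∈ Set.Ioo (t0 - δ) (t0 + δ), deriv ξ t = (y t)⁻¹ :=
    fun t ht => (hξ_d t ht).deriv
  -- unit speed
  have hunit : ∀ t ∈ Set.Ioo (t0 - δ) (t0 + δ),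
      -(deriv a1 t) ^ 2 + (deriv a2 t) ^ 2 + (deriv y t) ^ 2 = 1 := by
    intro t ht
    rw [hda1 t ht, hda2 t ht]
    have e1 : g1 t = Real.sinh (ξ t) - deriv y t * Real.cosh (ξ t) := rfl
    have e2 : g2 t = Real.cosh (ξ t) - deriv y t * Real.sinh (ξ t) := rfl
    rw [e1, e2]
    linear_combination (1 - (deriv y t)^2) * Real.cosh_sq_sub_sinh_sq (ξ t)
  -- derivative of deriv y
  have hz_d : ∀ t ∈ Set.Ioo (t0 - δ) (t0 + δ), HasDerivAt (deriv y) (-(κ t) * y t) t := by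
    intro t ht
    have h := (hy'_an t ht).hasDerivAt
    rwa [hy_ode t ht] at h
  -- second derivatives of a1, a2
  have hg1_d : ∀ t ∈ Set.Ioo (t0 - δ) (t0 + δ), HasDerivAt g1
      (Real.cosh (ξ t) * (y t)⁻¹ -
        ((-(κ t) * y t) * Real.cosh (ξ t) + deriv y t * (Real.sinh (ξ t) * (y t)⁻¹))) t := by
    intro t ht
    have h1 : HasDerivAt (fun u => Real.sinh (ξ u)) (Real.cosh (ξ t) * (y t)⁻¹) t :=
      HasDerivAt.comp t (Real.hasDerivAt_sinh (ξ t)) (hξ_d t ht)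
    have h2 : HasDerivAt (fun u => Real.cosh (ξ u)) (Real.sinh (ξ t) * (y t)⁻¹) t :=
      HasDerivAt.comp t (Real.hasDerivAt_cosh (ξ t)) (hξ_d t ht)
    exact h1.sub ((hz_d t ht).mul h2)
  have hg2_d : ∀ t ∈ Set.Ioo (t0 - δ) (t0 + δ), HasDerivAt g2
      (Real.sinh (ξ t) * (y t)⁻¹ -
        ((-(κ t) * y t) * Real.sinh (ξ t) + deriv y t * (Real.cosh (ξ t) * (y t)⁻¹))) t := by
    intro t ht
    have h1 : HasDerivAt (fun u => Real.sinh (ξ u)) (Real.cosh (ξ t) * (y t)⁻¹) t :=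
      HasDerivAt.comp t (Real.hasDerivAt_sinh (ξ t)) (hξ_d t ht)
    have h2 : HasDerivAt (fun u => Real.cosh (ξ u)) (Real.sinh (ξ t) * (y t)⁻¹) t :=
      HasDerivAt.comp t (Real.hasDerivAt_cosh (ξ t)) (hξ_d t ht)
    exact h2.sub ((hz_d t ht).mul h1)
  have hdd1 : ∀ t ∈ Set.Ioo (t0 - δ) (t0 + δ), deriv (deriv a1) t =
      Real.cosh (ξ t) * (y t)⁻¹ -
        ((-(κ t) * y t) * Real.cosh (ξ t) + deriv y t * (Real.sinh (ξ t) * (y t)⁻¹)) := by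
    intro t ht
    have hev : deriv a1 =ᶠ[nhds t] g1 :=
      Filter.eventuallyEq_of_mem (hJopen.mem_nhds ht) (fun u hu => (ha1_d u hu).deriv)
    rw [hev.deriv_eq, (hg1_d t ht).deriv]
  have hdd2 : ∀ t ∈ Set.Ioo (t0 - δ) (t0 + δ), deriv (deriv a2) t =
      Real.sinh (ξ t) * (y t)⁻¹ -
        ((-(κ t) * y t) * Real.sinh (ξ t) + deriv y t * (Real.cosh (ξ t) * (y t)⁻¹)) := by
    intro t ht
    have hev : deriv a2 =ᶠ[nhds t] g2 :=
      Filter.eventuallyEq_of_mem (hJopen.mem_nhds ht) (fun u hu => (ha2_d u hu).deriv)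
    rw [hev.deriv_eq, (hg2_d t ht).deriv]
  -- key numerator identity
  have key : ∀ t ∈ Set.Ioo (t0 - δ) (t0 + δ),
      deriv a2 t + y t * (deriv (deriv a2) t * deriv y t - deriv a2 t * deriv (deriv y) t)
        = deriv a1 t * deriv y t + y t * deriv (deriv a1) t := by
    intro t ht
    rw [hda1 t ht, hda2 t ht, hdd1 t ht, hdd2 t ht, hy_ode t ht]
    have e1 : g1 t = Real.sinh (ξ t) - deriv y t * Real.cosh (ξ t) := rfl
    have e2 : g2 t = Real.cosh (ξ t) - deriv y t * Real.sinh (ξ t) := rfl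
    rw [e1, e2]
    field_simp [hy_ne t ht]
    ring
  refine ⟨δ, hδ, a1, a2, y, ξ, 1, 1, Or.inl rfl, Or.inl rfl, hy_cd, hy_pos, hy_ode, ?_, ?_, ?_,
    hunit, ?_, ?_⟩
  · intro t ht
    rw [hdξ t ht, one_div]
  · intro t ht
    rw [hda1 t ht, one_mul]
  · intro t ht
    rw [hda2 t ht, one_mul]
  · -- mean curvature vector is lightlike or zero
    intro t ht θ
    have hu : (deriv a2 t)^2 + (deriv y t)^2 = 1 + (deriv a1 t)^2 := by
      have := hunit t ht; linarith
    obtain ⟨h11, h22, h12⟩ := mink_etas a1 a2 y t θ hu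
    have hEq : hh2 a1 a2 y t = hh1 a1 y t := by
      unfold hh1 hh2
      rw [key t ht]
    show mink (Hvec a1 a2 y t θ) (Hvec a1 a2 y t θ) = 0
    unfold Hvec
    rw [hEq, mink_add_smul, h11, h22, h12]
    ring
  · intro t ht
    rw [hy_ode t ht]
    field_simp [hy_ne t ht]
end
end
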